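/- arXiv:2505.15990 — 3 statements merged into one kernel-verified Lean document; each statement's English description precedes it below -/
import Mathlib

section
/- In any Nelson algebra N, the following identity holds: (x ∨ y) → z = (x → z) ∧ (y → z). -/
/-- A Nelson algebra: a distributive lattice (axioms N1, N2) with a De Morgan
involution `tilde` (N3, N4), the Kleene condition (N5), and a weak implication
`imp` satisfying (N6)-(N8). -/
class NelsonAlgebra (N : Type*) extends DistribLattice N where
  one : N
  tilde : N → N
  imp : N → N → N
  tilde_tilde : ∀ x : N, tilde (tilde x) = x
  tilde_sup : ∀ x y : N, tilde (x ⊔ y) = tilde x ⊓ tilde y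
  kleene : ∀ x y : N, x ⊓ tilde x = (x ⊓ tilde x) ⊓ (y ⊔ tilde y)
  imp_self : ∀ x : N, imp x x = one
  imp_imp : ∀ x y z : N, imp x (imp y z) = imp (x ⊓ y) z
  inf_imp : ∀ x y : N, x ⊓ imp x y = x ⊓ (tilde x ⊔ y)

open NelsonAlgebra

section Aux

variable {N : Type*} [NelsonAlgebra N]

private lemma le_one' (x : N) : x ≤ (one : N) := by
  have h := NelsonAlgebra.inf_imp x x
  rw [NelsonAlgebra.imp_self] at h
  have h2 : x ⊓ (one : N) = x := by
    rw [h]; exact inf_eq_left.mpr le_sup_right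
  exact inf_eq_left.mp h2

private lemma inf_one' (x : N) : x ⊓ (one : N) = x :=
  inf_eq_left.mpr (le_one' x)

private lemma tilde_inf' (x y : N) : tilde (x ⊓ y) = tilde x ⊔ tilde y := by
  have := tilde_sup (tilde x) (tilde y)
  rw [tilde_tilde, tilde_tilde] at this
  calc tilde (x ⊓ y) = tilde (tilde (tilde x ⊔ tilde y)) := by rw [this]
    _ = tilde x ⊔ tilde y := tilde_tilde _

private lemma tilde_antitone' {x y : N} (h : x ≤ y) : tilde y ≤ tilde x := by
  have hxy : x ⊔ y = y := sup_eq_right.mpr h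
  have : tilde y = tilde x ⊓ tilde y := by
    conv_lhs => rw [← hxy, tilde_sup]
  exact le_of_eq_of_le this inf_le_left

private lemma kleene_le' (x y : N) : x ⊓ tilde x ≤ y ⊔ tilde y :=
  inf_eq_left.mp (kleene x y).symm

private lemma imp_one' (x : N) : imp x (one : N) = one := by
  calc imp x (one : N) = imp x (imp x x) := by rw [NelsonAlgebra.imp_self]
    _ = imp (x ⊓ x) x := NelsonAlgebra.imp_imp x x x
    _ = imp x x := by rw [inf_idem]
    _ = one := NelsonAlgebra.imp_self x

/-- L7: if `s ≤ ∼s ⊔ w` then `imp s w = 1`. -/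
private lemma imp_eq_one_of_le {s w : N} (h : s ≤ tilde s ⊔ w) :
    imp s w = one := by
  -- s ≤ w ⊔ ∼w
  have h2 : s ≤ w ⊔ tilde w := by
    have hs : s = (s ⊓ tilde s) ⊔ (s ⊓ w) := by
      conv_lhs => rw [← inf_eq_left.mpr h, inf_sup_left]
    calc s = (s ⊓ tilde s) ⊔ (s ⊓ w) := hs
      _ ≤ (w ⊔ tilde w) ⊔ (w ⊔ tilde w) :=
        sup_le_sup (kleene_le' s w) (le_trans inf_le_right le_sup_left)
      _ = w ⊔ tilde w := sup_idem _
  set t := tilde s ⊔ w with ht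
  set g := imp t w with hg
  have hst : s ⊓ t = s := inf_eq_left.mpr h
  have htt : tilde t = s ⊓ tilde w := by
    rw [ht, tilde_sup, tilde_tilde]
  have h3 : s ⊓ g = s := by
    calc s ⊓ g = (s ⊓ t) ⊓ g := by rw [hst]
      _ = s ⊓ (t ⊓ g) := inf_assoc s t g
      _ = s ⊓ (t ⊓ (tilde t ⊔ w)) := by rw [hg, NelsonAlgebra.inf_imp]
      _ = (s ⊓ t) ⊓ (tilde t ⊔ w) := (inf_assoc s t _).symm
      _ = s ⊓ (tilde t ⊔ w) := by rw [hst]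
      _ = s ⊓ ((s ⊓ tilde w) ⊔ w) := by rw [htt]
      _ = (s ⊓ (s ⊓ tilde w)) ⊔ (s ⊓ w) := inf_sup_left s _ w
      _ = (s ⊓ tilde w) ⊔ (s ⊓ w) := by rw [← inf_assoc, inf_idem]
      _ = s ⊓ (tilde w ⊔ w) := (inf_sup_left s _ w).symm
      _ = s ⊓ (w ⊔ tilde w) := by rw [sup_comm (tilde w) w]
      _ = s := inf_eq_left.mpr h2
  calc imp s w = imp (s ⊓ t) w := by rw [hst]
    _ = imp s (imp t w) := (NelsonAlgebra.imp_imp s t w).symm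
    _ = imp (s ⊓ g) g := by rw [← hg, h3]
    _ = imp s (imp g g) := (NelsonAlgebra.imp_imp s g g).symm
    _ = imp s one := by rw [NelsonAlgebra.imp_self]
    _ = one := imp_one' s

/-- F3: `c ⊓ ((c ⊓ a) → b) = c ⊓ (∼c ⊔ (a → b))`. -/
private lemma f3 (a b c : N) :
    c ⊓ imp (c ⊓ a) b = c ⊓ (tilde c ⊔ imp a b) := by
  rw [← NelsonAlgebra.imp_imp, NelsonAlgebra.inf_imp]

/-- T2: `∼a ⊔ b ≤ a → b`. -/
private lemma tilde_sup_le_imp (a b : N) : tilde a ⊔ b ≤ imp a b := by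
  set n := tilde a ⊔ b with hn
  have htn : tilde n = a ⊓ tilde b := by rw [hn, tilde_sup, tilde_tilde]
  have h1 : imp (n ⊓ a) b = one := by
    apply imp_eq_one_of_le
    have hna : n ⊓ a = (a ⊓ tilde a) ⊔ (a ⊓ b) := by
      rw [hn, inf_comm, inf_sup_left]
    have : n ⊓ a ≤ tilde a ⊔ b := by
      rw [hna]
      exact sup_le (le_trans inf_le_right le_sup_left)
        (le_trans inf_le_right le_sup_right)
    refine le_trans this (sup_le_sup ?_ le_rfl)
    rw [tilde_inf']
    exact le_sup_right
  have h2 := f3 a b n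
  rw [h1, inf_one'] at h2
  -- h2 : n = n ⊓ (tilde n ⊔ imp a b)
  have h3 : n ⊓ tilde n ≤ imp a b := by
    have : n ⊓ tilde n ≤ a ⊓ imp a b := by
      rw [NelsonAlgebra.inf_imp]
      rw [htn]
      calc n ⊓ (a ⊓ tilde b) ≤ n ⊓ a := inf_le_inf_left n inf_le_left
        _ = a ⊓ n := inf_comm n a
        _ = a ⊓ (tilde a ⊔ b) := by rw [hn]
    exact le_trans this inf_le_right
  calc n = n ⊓ (tilde n ⊔ imp a b) := h2
    _ = (n ⊓ tilde n) ⊔ (n ⊓ imp a b) := inf_sup_left n _ _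
    _ ≤ imp a b := sup_le h3 inf_le_right

/-- Residuation: if `a ⊓ v ≤ ∼a ⊔ b` then `v ≤ a → b`. -/
private lemma le_imp_of {a b v : N} (h : a ⊓ v ≤ tilde a ⊔ b) :
    v ≤ imp a b := by
  have h1 : imp (v ⊓ a) b = one := by
    apply imp_eq_one_of_le
    calc v ⊓ a = a ⊓ v := inf_comm v a
      _ ≤ tilde a ⊔ b := h
      _ ≤ tilde (v ⊓ a) ⊔ b := by
          rw [tilde_inf']
          exact sup_le_sup le_sup_right le_rfl
  have h2 := f3 a b v
  rw [h1, inf_one'] at h2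
  -- h2 : v = v ⊓ (tilde v ⊔ imp a b)
  have h3 : a ⊓ tilde b ≤ v ⊔ tilde v := by
    have hh : a ⊓ tilde b ≤ tilde a ⊔ tilde v := by
      have := tilde_antitone' h
      rw [tilde_sup, tilde_tilde, tilde_inf'] at this
      exact this
    calc a ⊓ tilde b = (a ⊓ tilde b) ⊓ (tilde a ⊔ tilde v) :=
          (inf_eq_left.mpr hh).symm
      _ = ((a ⊓ tilde b) ⊓ tilde a) ⊔ ((a ⊓ tilde b) ⊓ tilde v) :=
          inf_sup_left _ _ _
      _ ≤ (v ⊔ tilde v) ⊔ (v ⊔ tilde v) := by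
          refine sup_le_sup ?_ (le_trans inf_le_right le_sup_right)
          calc (a ⊓ tilde b) ⊓ tilde a ≤ a ⊓ tilde a :=
                inf_le_inf_right _ inf_le_left
            _ ≤ v ⊔ tilde v := kleene_le' a v
      _ = v ⊔ tilde v := sup_idem _
  have h4 : v ⊓ tilde v ≤ imp a b := by
    have hda : tilde (imp a b) ≤ a ⊓ tilde b := by
      have := tilde_antitone' (tilde_sup_le_imp a b)
      rw [tilde_sup, tilde_tilde] at this
      exact this
    have h5 : tilde (imp a b) ≤ v ⊔ tilde v := le_trans hda h3
    have h6 := tilde_antitone' h5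
    rw [tilde_tilde, tilde_sup, tilde_tilde] at h6
    calc v ⊓ tilde v = tilde v ⊓ v := inf_comm v _
      _ ≤ imp a b := h6
  calc v = v ⊓ (tilde v ⊔ imp a b) := h2
    _ = (v ⊓ tilde v) ⊔ (v ⊓ imp a b) := inf_sup_left v _ _
    _ ≤ imp a b := sup_le h4 inf_le_right

end Aux

theorem sup_imp_eq {N : Type*} [NelsonAlgebra N] (x y z : N) :
    imp (x ⊔ y) z = imp x z ⊓ imp y z := by
  set A := imp (x ⊔ y) z with hA
  set B := imp x z ⊓ imp y z with hB
  -- A ≤ B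
  have hxyA : (x ⊔ y) ⊓ A = (x ⊔ y) ⊓ ((tilde x ⊓ tilde y) ⊔ z) := by
    rw [hA, NelsonAlgebra.inf_imp, tilde_sup]
  have hALE : ∀ u w : N, u ⊔ w = x ⊔ y → u ⊓ A ≤ tilde u ⊔ z := by
    intro u w huw
    have h1 : u ⊓ A = u ⊓ ((x ⊔ y) ⊓ A) := by
      rw [← inf_assoc, inf_eq_left.mpr (le_trans le_sup_left (le_of_eq huw))]
    calc u ⊓ A = u ⊓ ((x ⊔ y) ⊓ A) := h1
      _ = u ⊓ ((x ⊔ y) ⊓ ((tilde x ⊓ tilde y) ⊔ z)) := by rw [hxyA]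
      _ ≤ (tilde x ⊓ tilde y) ⊔ z := le_trans inf_le_right inf_le_right
      _ ≤ tilde u ⊔ z := by
          refine sup_le_sup ?_ le_rfl
          rw [← tilde_sup, ← huw, tilde_sup]
          exact inf_le_left
  have hAB : A ≤ B := by
    refine le_inf ?_ ?_
    · exact le_imp_of (hALE x y rfl)
    · exact le_imp_of (hALE y x (sup_comm y x))
  -- B ≤ A
  have key : ∀ u w : N, u ⊓ (imp u z ⊓ imp w z) ≤ (tilde u ⊓ tilde w) ⊔ z := by
    intro u w
    have h1 : u ⊓ (imp u z ⊓ imp w z) =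
        ((u ⊓ tilde u) ⊓ imp w z) ⊔ ((u ⊓ z) ⊓ imp w z) := by
      calc u ⊓ (imp u z ⊓ imp w z) = (u ⊓ imp u z) ⊓ imp w z := by
            rw [inf_assoc]
        _ = (u ⊓ (tilde u ⊔ z)) ⊓ imp w z := by rw [NelsonAlgebra.inf_imp]
        _ = ((u ⊓ tilde u) ⊔ (u ⊓ z)) ⊓ imp w z := by rw [inf_sup_left]
        _ = _ := inf_sup_right _ _ _
    rw [h1]
    refine sup_le ?_ (le_trans inf_le_left (le_trans inf_le_right le_sup_right))
    -- (u ⊓ ∼u) ⊓ imp w z ≤ (∼u ⊓ ∼w) ⊔ z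
    have h2 : (u ⊓ tilde u) ⊓ imp w z =
        (((u ⊓ tilde u) ⊓ imp w z) ⊓ w) ⊔ (((u ⊓ tilde u) ⊓ imp w z) ⊓ tilde w) := by
      conv_lhs => rw [← inf_eq_left.mpr
        (le_trans (inf_le_of_left_le (kleene_le' u w)) le_rfl : (u ⊓ tilde u) ⊓ imp w z ≤ w ⊔ tilde w)]
      rw [inf_sup_left]
    rw [h2]
    refine sup_le ?_ ?_
    · -- piece with w : ≤ w ⊓ imp w z = w ⊓ (∼w ⊔ z) = (w⊓∼w) ⊔ (w⊓z)
      have h3 : ((u ⊓ tilde u) ⊓ imp w z) ⊓ w =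
          (u ⊓ tilde u) ⊓ (w ⊓ imp w z) := by ac_rfl
      rw [h3, NelsonAlgebra.inf_imp, inf_sup_left w, inf_sup_left (u ⊓ tilde u)]
      refine sup_le ?_ (le_trans inf_le_right (le_trans inf_le_right le_sup_right))
      refine le_trans ?_ le_sup_left
      exact le_inf (le_trans inf_le_left inf_le_right)
        (le_trans inf_le_right inf_le_right)
    · -- piece with ∼w : contains ∼u and ∼w
      refine le_trans ?_ le_sup_left
      refine le_inf (le_trans inf_le_left (le_trans inf_le_left inf_le_right))
        inf_le_right
  have hBA : B ≤ A := by
    apply le_imp_of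
    rw [tilde_sup]
    have : (x ⊔ y) ⊓ B = (x ⊓ B) ⊔ (y ⊓ B) := inf_sup_right x y B
    rw [this]
    refine sup_le ?_ ?_
    · exact key x y
    · have : y ⊓ B = y ⊓ (imp y z ⊓ imp x z) := by rw [hB, inf_comm (imp x z)]
      rw [this]
      refine le_trans (key y x) ?_
      exact sup_le_sup (le_inf inf_le_right inf_le_left) le_rfl
  exact le_antisymm hAB hBA
end

section
/- In any Nelson algebra N, the following identity holds: x → (y → z) = (x → y) → (x → z). -/
open NelsonAlgebra

namespace NelsonAux

variable {N : Type*} [NelsonAlgebra N]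

/-- De Morgan for meets, derived from `tilde_sup` and the involution. -/
lemma tilde_inf (x y : N) : tilde (x ⊓ y) = tilde x ⊔ tilde y := by
  have h := tilde_sup (tilde x) (tilde y)
  rw [tilde_tilde, tilde_tilde] at h
  rw [← h, tilde_tilde]

/-- Kleene condition as an inequality. -/
lemma kle (a b : N) : a ⊓ tilde a ≤ b ⊔ tilde b :=
  le_of_eq_of_le (kleene a b) inf_le_right

lemma inf_one (x : N) : x ⊓ one = x := by
  have h := NelsonAlgebra.inf_imp (N := N) x x
  rw [NelsonAlgebra.imp_self] at h
  rw [h, sup_comm, inf_sup_self]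

lemma le_one (x : N) : x ≤ one := inf_eq_left.mp (inf_one x)

lemma imp_one (x : N) : imp x one = one := by
  calc imp x one = imp x (imp x x) := by rw [NelsonAlgebra.imp_self]
    _ = imp (x ⊓ x) x := NelsonAlgebra.imp_imp x x x
    _ = imp x x := by rw [inf_idem]
    _ = one := NelsonAlgebra.imp_self x

lemma imp_of_le {x y : N} (h : x ≤ y) : imp x y = one := by
  calc imp x y = imp (x ⊓ y) y := by rw [inf_eq_left.mpr h]
    _ = imp x (imp y y) := (NelsonAlgebra.imp_imp x y y).symm
    _ = imp x one := by rw [NelsonAlgebra.imp_self]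
    _ = one := imp_one x

/-- (C1) : if `x ≤ ∼x ⊔ y` then `imp x y = 1`. -/
lemma imp_eq_one {x y : N} (h : x ≤ tilde x ⊔ y) : imp x y = one := by
  have h1 : x ⊓ imp x y = x := by
    rw [NelsonAlgebra.inf_imp]; exact inf_eq_left.mpr h
  calc imp x y = imp (imp x y ⊓ x) y := by rw [inf_comm, h1]
    _ = imp (imp x y) (imp x y) := (NelsonAlgebra.imp_imp _ x y).symm
    _ = one := NelsonAlgebra.imp_self _

/-- (FIX) : if `t` is a fixed point of `imp s ·` then `s ⊓ ∼s ≤ t`. -/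
lemma fix_le {s t : N} (h : imp s t = t) : s ⊓ tilde s ≤ t := by
  have h2 : s ⊓ t = (s ⊓ tilde s) ⊔ (s ⊓ t) := by
    conv_lhs => rw [← h, NelsonAlgebra.inf_imp, inf_sup_left]
  have h3 : s ⊓ tilde s ≤ s ⊓ t := le_of_le_of_eq le_sup_left h2.symm
  exact h3.trans inf_le_right

/-- (EXP) : `t ≤ imp s t`. -/
lemma le_imp (s t : N) : t ≤ imp s t := by
  set w := imp s t with hw
  have h1 : imp t w = one := by
    rw [hw, NelsonAlgebra.imp_imp]
    exact imp_of_le inf_le_left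
  have hstar : t = (t ⊓ tilde t) ⊔ (t ⊓ w) := by
    have h := NelsonAlgebra.inf_imp t w
    rw [h1, inf_one, inf_sup_left] at h
    exact h
  -- t ⊓ s ≤ w
  have h3 : t ⊓ s ≤ w := by
    have hs : s ⊓ w = (s ⊓ tilde s) ⊔ (s ⊓ t) := by
      rw [hw, NelsonAlgebra.inf_imp, inf_sup_left]
    have : (t ⊓ s) ⊓ w = t ⊓ s := by
      calc (t ⊓ s) ⊓ w = t ⊓ (s ⊓ w) := inf_assoc t s w
        _ = t ⊓ ((s ⊓ tilde s) ⊔ (s ⊓ t)) := by rw [hs]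
        _ = (t ⊓ (s ⊓ tilde s)) ⊔ (t ⊓ (s ⊓ t)) := inf_sup_left _ _ _
        _ = t ⊓ s := by
            apply le_antisymm
            · exact sup_le (inf_le_inf_left t inf_le_left)
                (le_inf inf_le_left (inf_le_of_right_le inf_le_left))
            · refine le_sup_of_le_right (le_inf inf_le_left ?_)
              exact le_inf (inf_le_right) (inf_le_left)
    exact inf_eq_left.mp this
  -- (s ⊔ t) ⊓ ∼(s ⊔ t) ≤ w
  have h4 : (s ⊔ t) ⊓ tilde (s ⊔ t) ≤ w := by
    apply fix_le
    rw [hw, NelsonAlgebra.imp_imp]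
    have : (s ⊔ t) ⊓ s = s := by rw [inf_comm, inf_sup_self]
    rw [this]
  -- t ⊓ ∼t ≤ w
  have h5 : t ⊓ tilde t ≤ w := by
    have hk : t ⊓ tilde t = ((t ⊓ tilde t) ⊓ s) ⊔ ((t ⊓ tilde t) ⊓ tilde s) := by
      conv_lhs => rw [kleene t s, inf_sup_left]
    rw [hk]
    apply sup_le
    · exact le_trans (le_inf (inf_le_of_left_le inf_le_left) inf_le_right) h3
    · refine le_trans ?_ h4
      apply le_inf
      · exact inf_le_of_left_le (inf_le_of_left_le le_sup_right)
      · rw [tilde_sup]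
        exact le_inf inf_le_right (inf_le_of_left_le inf_le_right)
  have : t ≤ w := by
    conv_lhs => rw [hstar]
    exact sup_le h5 inf_le_right
  exact this

/-- The kernel lemma (K): for `m = q ⊓ ∼q` with `m ≤ ∼p`,
`imp (p ⊔ m) c = imp p c`. -/
lemma kernel {p q c : N} (h : q ⊓ tilde q ≤ tilde p) :
    imp (p ⊔ q ⊓ tilde q) c = imp p c := by
  set m := q ⊓ tilde q with hm
  set Np := p ⊔ m with hNp
  set k := imp Np c with hk
  set k0 := imp p c with hk0
  have htm : tilde m = q ⊔ tilde q := by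
    rw [hm, tilde_inf, tilde_tilde, sup_comm]
  have ha : m ≤ tilde m := by
    rw [htm]; exact kle q q
  have hpN : p ⊓ Np = p := inf_eq_left.mpr le_sup_left
  have hNN : Np ⊓ Np = Np := inf_idem Np
  -- imp p k = k0
  have hpk : imp p k = k0 := by rw [hk, hk0, NelsonAlgebra.imp_imp, hpN]
  -- (i) : k ≤ k0
  have hi : k ≤ k0 := by rw [← hpk]; exact le_imp p k
  -- N ⊓ ∼N ≤ k
  have hfix : Np ⊓ tilde Np ≤ k := by
    apply fix_le
    rw [hk, NelsonAlgebra.imp_imp, hNN]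
  -- m ≤ k
  have hmk : m ≤ k := by
    refine le_trans (le_inf le_sup_right ?_) hfix
    rw [hNp, tilde_sup]
    exact le_inf h ha
  -- p ⊓ ∼p ≤ k
  have hppk : p ⊓ tilde p ≤ k := by
    refine le_trans (le_inf (inf_le_of_left_le le_sup_left) ?_) hfix
    rw [hNp, tilde_sup]
    refine le_inf inf_le_right ?_
    rw [htm]
    exact kle p q
  -- p ⊓ c ≤ k
  have hpck : p ⊓ c ≤ k := by
    have hNk : Np ⊓ k = (Np ⊓ tilde Np) ⊔ (Np ⊓ c) := by
      rw [hk, NelsonAlgebra.inf_imp, inf_sup_left]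
    have hpcN : (p ⊓ c) ⊓ Np = p ⊓ c :=
      inf_eq_left.mpr (inf_le_of_left_le le_sup_left)
    have : (p ⊓ c) ⊓ k = p ⊓ c := by
      calc (p ⊓ c) ⊓ k = ((p ⊓ c) ⊓ Np) ⊓ k := by rw [hpcN]
        _ = (p ⊓ c) ⊓ (Np ⊓ k) := inf_assoc _ _ _
        _ = (p ⊓ c) ⊓ ((Np ⊓ tilde Np) ⊔ (Np ⊓ c)) := by rw [hNk]
        _ = ((p ⊓ c) ⊓ (Np ⊓ tilde Np)) ⊔ ((p ⊓ c) ⊓ (Np ⊓ c)) := inf_sup_left _ _ _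
        _ = p ⊓ c := by
            apply le_antisymm
            · exact sup_le inf_le_left inf_le_left
            · refine le_sup_of_le_right (le_inf le_rfl ?_)
              exact le_inf (inf_le_of_left_le le_sup_left) inf_le_right
    exact inf_eq_left.mp this
  -- (k0 ⊔ N) ⊓ ∼(k0 ⊔ N) ≤ k
  have hs' : (k0 ⊔ Np) ⊓ tilde (k0 ⊔ Np) ≤ k := by
    apply fix_le
    rw [hk, NelsonAlgebra.imp_imp]
    have : (k0 ⊔ Np) ⊓ Np = Np := inf_eq_right.mpr le_sup_right
    rw [this]
  -- m ≤ k0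
  have hmk0 : m ⊓ k0 = m := inf_eq_left.mpr (hmk.trans hi)
  -- k0 ⊓ N = ((p ⊓ ∼p) ⊔ (p ⊓ c)) ⊔ m
  have hj : k0 ⊓ Np = ((p ⊓ tilde p) ⊔ (p ⊓ c)) ⊔ m := by
    calc k0 ⊓ Np = Np ⊓ k0 := inf_comm _ _
      _ = (p ⊓ k0) ⊔ (m ⊓ k0) := by rw [hNp, inf_sup_right]
      _ = (p ⊓ (tilde p ⊔ c)) ⊔ m := by rw [hk0, NelsonAlgebra.inf_imp, hmk0]
      _ = ((p ⊓ tilde p) ⊔ (p ⊓ c)) ⊔ m := by rw [inf_sup_left]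
  have hjk : k0 ⊓ Np ≤ k := by
    rw [hj]
    exact sup_le (sup_le hppk hpck) hmk
  -- (iia) : imp k0 k = 1
  have hiia : imp k0 k = one := by
    rw [hk, NelsonAlgebra.imp_imp]
    have hsub : k0 ⊓ Np ≤ tilde (k0 ⊓ Np) ⊔ c := by
      rw [hj, tilde_sup, tilde_sup, tilde_inf, tilde_inf, tilde_tilde]
      apply sup_le (sup_le ?_ ?_) ?_
      · -- p ⊓ ∼p ≤ ∼s ⊔ c
        refine le_sup_of_le_left (le_inf (le_inf ?_ ?_) ?_)
        · exact le_sup_of_le_left inf_le_right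
        · exact le_sup_of_le_left inf_le_right
        · rw [htm]; exact kle p q
      · -- p ⊓ c ≤ ∼s ⊔ c
        exact le_sup_of_le_right inf_le_right
      · -- m ≤ ∼s ⊔ c
        refine le_sup_of_le_left (le_inf (le_inf ?_ ?_) ?_)
        · rw [sup_comm]
          exact le_of_eq_of_le hm (kle q p)
        · exact le_sup_of_le_left h
        · exact ha
    exact imp_eq_one hsub
  -- (iib) : k0 ⊓ ∼k0 ≤ k
  have hiib : k0 ⊓ tilde k0 ≤ k := by
    have hk2 : k0 ⊓ tilde k0 =
        ((k0 ⊓ tilde k0) ⊓ Np) ⊔ ((k0 ⊓ tilde k0) ⊓ tilde Np) := by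
      conv_lhs => rw [kleene k0 Np, inf_sup_left]
    rw [hk2]
    apply sup_le
    · exact le_trans (inf_le_inf_right Np inf_le_left) hjk
    · have h1 : (k0 ⊓ tilde k0) ⊓ tilde Np ≤ (k0 ⊔ Np) ⊓ tilde (k0 ⊔ Np) := by
        rw [tilde_sup k0 Np]
        exact le_inf (inf_le_of_left_le (inf_le_of_left_le le_sup_left))
          (le_inf (inf_le_left.trans inf_le_right) inf_le_right)
      exact h1.trans hs'
  -- conclude k0 ≤ k
  have hii : k0 ≤ k := by
    have h := NelsonAlgebra.inf_imp k0 k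
    rw [hiia, inf_one, inf_sup_left] at h
    calc k0 = (k0 ⊓ tilde k0) ⊔ (k0 ⊓ k) := h
      _ ≤ k := sup_le hiib inf_le_right
  exact le_antisymm hi hii

end NelsonAux

open NelsonAux in
theorem imp_imp_distrib {N : Type*} [NelsonAlgebra N] (x y z : N) :
    imp x (imp y z) = imp (imp x y) (imp x z) := by
  have hm : x ⊓ tilde x ≤ tilde (x ⊓ y) := by
    rw [tilde_inf]
    exact le_sup_of_le_left inf_le_right
  have hK := kernel (p := x ⊓ y) (q := x) (c := z) hm
  calc imp x (imp y z) = imp (x ⊓ y) z := NelsonAlgebra.imp_imp x y z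
    _ = imp (x ⊓ y ⊔ x ⊓ tilde x) z := hK.symm
    _ = imp (x ⊓ (y ⊔ tilde x)) z := by rw [inf_sup_left]
    _ = imp (x ⊓ (tilde x ⊔ y)) z := by rw [sup_comm y (tilde x)]
    _ = imp (x ⊓ imp x y) z := by rw [← NelsonAlgebra.inf_imp]
    _ = imp (imp x y ⊓ x) z := by rw [inf_comm x (imp x y)]
    _ = imp (imp x y) (imp x z) := (NelsonAlgebra.imp_imp _ x z).symm
end

section
/- If N is a Nelson algebra in which every completely irreducible deductive system is either maximal or properly contained in exactly one proper deductive system, then N is five-valued, i.e., satisfies ((x→z)→y)→(((y→x)→y)→y)=1 for all x,y,z. -/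
open NelsonAlgebra

/-- A deductive system: contains 1 and is closed under modus ponens. -/
def IsDeductiveSystem {N : Type*} [NelsonAlgebra N] (D : Set N) : Prop :=
  NelsonAlgebra.one ∈ D ∧ ∀ x y : N, x ∈ D → imp x y ∈ D → y ∈ D

/-- A completely irreducible deductive system: proper, and whenever it is an
intersection of a family of deductive systems it equals one of them. -/
def IsCompletelyIrreducibleDS {N : Type*} [NelsonAlgebra N] (D : Set N) : Prop :=
  IsDeductiveSystem D ∧ D ≠ Set.univ ∧
    ∀ S : Set (Set N), (∀ D' ∈ S, IsDeductiveSystem D') → D = ⋂₀ S → D ∈ S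

/-- A maximal deductive system. -/
def IsMaximalDS {N : Type*} [NelsonAlgebra N] (M : Set N) : Prop :=
  IsDeductiveSystem M ∧ M ≠ Set.univ ∧
    ∀ D : Set N, IsDeductiveSystem D → D ≠ Set.univ → M ⊆ D → M = D

namespace NelsonHelpers

open NelsonAlgebra

variable {N : Type*} [NelsonAlgebra N]

lemma tilde_inf (x y : N) : tilde (x ⊓ y) = tilde x ⊔ tilde y := by
  have h := tilde_sup (tilde x) (tilde y)
  rw [tilde_tilde, tilde_tilde] at h
  rw [← h, tilde_tilde]

lemma le_one (x : N) : x ≤ one := by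
  have h := inf_imp x x
  rw [NelsonAlgebra.imp_self] at h
  have hx : x ⊓ (one : N) = x := by
    rw [h]; exact inf_eq_left.2 le_sup_right
  exact inf_eq_left.mp hx

lemma tilde_one_le (x : N) : tilde (one : N) ≤ x := by
  have h1 : ((tilde x : N) ⊔ one) = one := sup_eq_right.2 (le_one _)
  have h := tilde_sup (tilde x) (one : N)
  rw [h1, tilde_tilde] at h
  exact h ▸ inf_le_left

lemma imp_eq_one_of_le_tilde {x y : N} (h : x ≤ tilde x ⊔ y) : imp x y = one := by
  have hx : x ⊓ imp x y = x := by rw [inf_imp]; exact inf_eq_left.2 h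
  have h2 : imp (imp x y) (imp x y) = imp x y := by
    conv_lhs => rw [imp_imp]
    rw [inf_comm, hx]
  rw [NelsonAlgebra.imp_self] at h2
  exact h2.symm

lemma imp_of_le {x y : N} (h : x ≤ y) : imp x y = one :=
  imp_eq_one_of_le_tilde (h.trans le_sup_right)

lemma imp_one (x : N) : imp x one = one := imp_of_le (le_one x)

lemma one_imp (y : N) : imp one y = y := by
  have h := inf_imp (one : N) y
  have h1 : (one : N) ⊓ imp one y = imp one y := by
    rw [inf_comm]; exact inf_eq_left.2 (le_one _)
  have h2 : (one : N) ⊓ (tilde one ⊔ y) = tilde one ⊔ y := by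
    rw [inf_comm]; exact inf_eq_left.2 (le_one _)
  rw [h1, h2] at h
  rw [h, sup_eq_right.2 (tilde_one_le y)]

/-- The internalized "Frege"-type law needed for deduction systems. -/
lemma frege (u v w : N) :
    imp (imp u v) (imp (imp (u ⊓ v) w) (imp u w)) = one := by
  rw [imp_imp, imp_imp]
  apply imp_eq_one_of_le_tilde
  set A := imp u v with hA
  set B := imp (u ⊓ v) w with hB
  have h1 : u ⊓ A = u ⊓ (tilde u ⊔ v) := inf_imp u v
  have h2 : (u ⊓ v) ⊓ B = (u ⊓ v) ⊓ (tilde (u ⊓ v) ⊔ w) := inf_imp (u ⊓ v) w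
  have hm : A ⊓ B ⊓ u = (u ⊓ tilde u ⊓ B) ⊔ ((u ⊓ v) ⊓ (tilde (u ⊓ v) ⊔ w)) := by
    calc A ⊓ B ⊓ u = (u ⊓ A) ⊓ B := by
          rw [inf_comm (A ⊓ B) u, ← inf_assoc]
      _ = (u ⊓ (tilde u ⊔ v)) ⊓ B := by rw [h1]
      _ = (u ⊓ tilde u ⊔ u ⊓ v) ⊓ B := by rw [inf_sup_left]
      _ = (u ⊓ tilde u ⊓ B) ⊔ ((u ⊓ v) ⊓ B) := by rw [inf_sup_right]
      _ = (u ⊓ tilde u ⊓ B) ⊔ ((u ⊓ v) ⊓ (tilde (u ⊓ v) ⊔ w)) := by rw [h2]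
  rw [hm, tilde_sup]
  set c1 := u ⊓ tilde u ⊓ B with hc1
  set c2 := (u ⊓ v) ⊓ (tilde (u ⊓ v) ⊔ w) with hc2
  have htc1 : tilde c1 = (tilde u ⊔ u) ⊔ tilde B := by
    rw [hc1, tilde_inf, tilde_inf, tilde_tilde]
  have htc2 : tilde (u ⊓ v) ≤ tilde c2 := by
    rw [hc2, tilde_inf (u ⊓ v) (tilde (u ⊓ v) ⊔ w)]; exact le_sup_left
  have hc1u : c1 ≤ u := inf_le_left.trans inf_le_left
  have hc1tu : c1 ≤ tilde u := inf_le_left.trans inf_le_right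
  have hb1 : c1 ≤ tilde c1 := by
    rw [htc1]; exact hc1u.trans (le_sup_of_le_left le_sup_right)
  have hb2 : c1 ≤ tilde c2 := by
    refine hc1tu.trans (le_trans ?_ htc2)
    rw [tilde_inf]; exact le_sup_left
  have he1 : (u ⊓ v) ⊓ tilde (u ⊓ v) ≤ tilde c1 := by
    rw [htc1]
    exact (inf_le_left.trans inf_le_left).trans (le_sup_of_le_left le_sup_right)
  have he2 : (u ⊓ v) ⊓ tilde (u ⊓ v) ≤ tilde c2 := inf_le_right.trans htc2
  apply sup_le
  · exact le_sup_of_le_left (le_inf hb1 hb2)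
  · have hd : c2 = ((u ⊓ v) ⊓ tilde (u ⊓ v)) ⊔ ((u ⊓ v) ⊓ w) :=
      inf_sup_left (u ⊓ v) (tilde (u ⊓ v)) w
    refine le_trans (le_of_eq hd) ?_
    apply sup_le
    · exact le_sup_of_le_left (le_inf he1 he2)
    · exact le_sup_of_le_right inf_le_right

section DS

variable {C : Set N}

lemma ds_mp (hC : IsDeductiveSystem C) {a b : N} (hab : imp a b = one)
    (ha : a ∈ C) : b ∈ C :=
  hC.2 a b ha (hab ▸ hC.1)

/-- The deductive system generated by `C` and `u`. -/
def ext (C : Set N) (u : N) : Set N := {v | imp u v ∈ C}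

lemma ext_ds (hC : IsDeductiveSystem C) (u : N) : IsDeductiveSystem (ext C u) := by
  constructor
  · show imp u one ∈ C
    rw [imp_one]; exact hC.1
  · intro a b ha hb
    have h1 : imp (u ⊓ a) b ∈ C := by rw [← imp_imp]; exact hb
    have h3 : imp (imp (u ⊓ a) b) (imp u b) ∈ C :=
      hC.2 _ _ ha ((frege u a b) ▸ hC.1)
    exact hC.2 _ _ h1 h3

lemma subset_ext (hC : IsDeductiveSystem C) (u : N) : C ⊆ ext C u := by
  intro c hc
  have h : imp c (imp u c) = one := by
    rw [imp_imp]; exact imp_of_le inf_le_left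
  exact hC.2 c (imp u c) hc (h ▸ hC.1)

lemma mem_ext_self (hC : IsDeductiveSystem C) (u : N) : u ∈ ext C u := by
  show imp u u ∈ C
  rw [NelsonAlgebra.imp_self]; exact hC.1

lemma ext_min (_hC : IsDeductiveSystem C) {E : Set N} (hE : IsDeductiveSystem E)
    (hCE : C ⊆ E) {u : N} (hu : u ∈ E) : ext C u ⊆ E :=
  fun v hv => hE.2 u v hu (hCE hv)

end DS

/-- Every element `t ≠ 1` is omitted by some completely irreducible deductive
system, which moreover is maximal among deductive systems omitting `t`. -/
lemma exists_ci {t : N} (ht : t ≠ one) :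
    ∃ C : Set N, IsCompletelyIrreducibleDS C ∧ t ∉ C ∧
      ∀ E : Set N, IsDeductiveSystem E → C ⊆ E → C ≠ E → t ∈ E := by
  set P : Set (Set N) := {E | IsDeductiveSystem E ∧ t ∉ E} with hP
  have hbase : ({one} : Set N) ∈ P := by
    refine ⟨⟨rfl, ?_⟩, ?_⟩
    · intro a b ha hab
      simp only [Set.mem_singleton_iff] at *
      subst ha; rwa [one_imp] at hab
    · simpa using ht
  have hub : ∀ c ⊆ P, IsChain (· ⊆ ·) c → c.Nonempty →
      ∃ ub ∈ P, ∀ s ∈ c, s ⊆ ub := by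
    intro c hcP hchain hcne
    refine ⟨⋃₀ c, ⟨⟨?_, ?_⟩, ?_⟩, fun s hs => Set.subset_sUnion_of_mem hs⟩
    · obtain ⟨s, hs⟩ := hcne
      exact Set.mem_sUnion_of_mem (hcP hs).1.1 hs
    · rintro a b ha hb
      obtain ⟨s1, hs1, has1⟩ := ha
      obtain ⟨s2, hs2, hbs2⟩ := hb
      rcases hchain.total hs1 hs2 with h12 | h21
      · exact Set.mem_sUnion_of_mem ((hcP hs2).1.2 a b (h12 has1) hbs2) hs2
      · exact Set.mem_sUnion_of_mem ((hcP hs1).1.2 a b has1 (h21 hbs2)) hs1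
    · intro htc
      obtain ⟨s, hs, hts⟩ := htc
      exact (hcP hs).2 hts
  obtain ⟨C, -, hCmax⟩ := zorn_subset_nonempty P hub _ hbase
  · have hCP : C ∈ P := hCmax.prop
    have hgrow : ∀ E : Set N, IsDeductiveSystem E → C ⊆ E → C ≠ E → t ∈ E := by
      intro E hE hCE hne
      by_contra htE
      exact hne (hCmax.eq_of_subset ⟨hE, htE⟩ hCE)
    refine ⟨C, ⟨hCP.1, ?_, ?_⟩, hCP.2, hgrow⟩
    · intro h
      exact hCP.2 (h ▸ Set.mem_univ t)
    · intro S hS hint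
      by_contra hCS
      have htS : ∀ D' ∈ S, t ∈ D' := by
        intro D' hD'
        have hsub : C ⊆ D' := hint ▸ Set.sInter_subset_of_mem hD'
        exact hgrow D' (hS D' hD') hsub (fun he => hCS (he ▸ hD'))
      exact hCP.2 (hint ▸ Set.mem_sInter.2 htS)

end NelsonHelpers

open NelsonHelpers

theorem ci_condition_implies_five_valued {N : Type*} [NelsonAlgebra N]
    (h : ∀ C : Set N, IsCompletelyIrreducibleDS C →
      IsMaximalDS C ∨
        ∃! D : Set N, IsDeductiveSystem D ∧ D ≠ Set.univ ∧ C ⊂ D) :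
    ∀ x y z : N,
      imp (imp (imp x z) y) (imp (imp (imp y x) y) y) = NelsonAlgebra.one := by
  intro x y z
  set p := imp (imp x z) y with hp_def
  set q := imp (imp y x) y with hq_def
  set t := imp p (imp q y) with ht_def
  by_contra ht
  obtain ⟨C, hCI, htC, hgrow⟩ := exists_ci ht
  have hC : IsDeductiveSystem C := hCI.1
  -- if `imp q y ∈ C` we get a contradiction
  have himp_t : imp q y ∈ C → False := by
    intro hqy
    have h1 : imp (imp q y) t = one := by
      rw [ht_def, imp_imp]; exact imp_of_le inf_le_left
    exact htC (ds_mp hC h1 hqy)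
  -- if `y ∈ C` we get a contradiction
  have hy_case : y ∈ C → False := by
    intro hy
    apply himp_t
    have h1 : imp y (imp q y) = one := by
      rw [imp_imp]; exact imp_of_le inf_le_left
    exact ds_mp hC h1 hy
  -- if `imp y x ∈ C` we get a contradiction
  have hr_case : imp y x ∈ C → False := by
    intro hr
    apply himp_t
    have h1 : imp y x ∈ ext C q := subset_ext hC q hr
    have h2 : q ∈ ext C q := mem_ext_self hC q
    have h3 : y ∈ ext C q := (ext_ds hC q).2 (imp y x) y h1 (by rw [← hq_def]; exact h2)
    exact h3
  by_cases hy : y ∈ C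
  · exact hy_case hy
  by_cases hr : imp y x ∈ C
  · exact hr_case hr
  -- the extension by y is a proper deductive system different from C
  have hEy_ds := ext_ds hC y
  have hEy_ne_C : ext C y ≠ C := by
    intro he
    exact hy (he ▸ mem_ext_self hC y)
  rcases h C hCI with hmax | ⟨D, ⟨hD_ds, hD_ne, hCD⟩, huniq⟩
  · -- maximal case
    by_cases hEy : ext C y = Set.univ
    · exact hr_case (show x ∈ ext C y from hEy ▸ Set.mem_univ x)
    · exact hEy_ne_C (hmax.2.2 (ext C y) hEy_ds hEy (subset_ext hC y)).symm
  · -- unique cover case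
    have htri : ∀ E : Set N, IsDeductiveSystem E → C ⊆ E →
        E = C ∨ E = D ∨ E = Set.univ := by
      intro E hE hCE
      by_cases h1 : E = Set.univ
      · exact Or.inr (Or.inr h1)
      by_cases h2 : E = C
      · exact Or.inl h2
      · exact Or.inr (Or.inl (huniq E ⟨hE, h1, hCE.lt_of_ne' h2⟩))
    -- locate ext C y
    have hEyD : ext C y = D := by
      rcases htri (ext C y) hEy_ds (subset_ext hC y) with h1 | h1 | h1
      · exact absurd h1 hEy_ne_C
      · exact h1
      · exact absurd (show x ∈ ext C y from h1 ▸ Set.mem_univ x) hr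
    have hyD : y ∈ D := hEyD ▸ mem_ext_self hC y
    -- locate H := ext C (p ⊓ q)
    have hyH : y ∉ ext C (p ⊓ q) := by
      intro hmem
      have h1 : imp (p ⊓ q) y ∈ C := hmem
      rw [← imp_imp, ← ht_def] at h1
      exact htC h1
    have hH : ext C (p ⊓ q) = C := by
      rcases htri (ext C (p ⊓ q)) (ext_ds hC (p ⊓ q)) (subset_ext hC (p ⊓ q)) with
        h1 | h1 | h1
      · exact h1
      · exact absurd (h1 ▸ hyD : y ∈ ext C (p ⊓ q)) hyH
      · exact absurd (h1 ▸ Set.mem_univ y : y ∈ ext C (p ⊓ q)) hyH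
    have hpC : p ∈ C := by
      have : p ∈ ext C (p ⊓ q) := by
        show imp (p ⊓ q) p ∈ C
        rw [imp_of_le inf_le_left]; exact hC.1
      exact hH ▸ this
    -- locate ext C (imp y x)
    have hEr_ne_C : ext C (imp y x) ≠ C := by
      intro he
      exact hr (he ▸ mem_ext_self hC (imp y x))
    rcases htri (ext C (imp y x)) (ext_ds hC (imp y x)) (subset_ext hC (imp y x)) with
      h1 | h1 | h1
    · exact hEr_ne_C h1
    · -- ext C (imp y x) = D = ext C y, so imp y x ∈ C, contradiction
      have hrD : imp y x ∈ D := h1 ▸ mem_ext_self hC (imp y x)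
      have hrEy : imp y x ∈ ext C y := hEyD ▸ hrD
      have h2 : imp y (imp y x) ∈ C := hrEy
      rw [imp_imp, inf_idem] at h2
      exact hr h2
    · -- ext C (imp y x) = univ, so ext C x = univ, so imp x z ∈ C
      have hrEx : imp y x ∈ ext C x := by
        show imp x (imp y x) ∈ C
        rw [imp_imp]
        rw [imp_of_le inf_le_left]
        exact hC.1
      have hsub : ext C (imp y x) ⊆ ext C x :=
        ext_min hC (ext_ds hC x) (subset_ext hC x) hrEx
      have hEx : ext C x = Set.univ :=
        Set.eq_univ_of_univ_subset (h1 ▸ hsub)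
      have hs : imp x z ∈ C := (hEx ▸ Set.mem_univ z : z ∈ ext C x)
      exact hy_case (hC.2 (imp x z) y hs hpC)
end
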